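/- Define polynomials L_k(X) ∈ ℚ[X] by L_1(X) = (X+1)/2 and L_k(X) = Σ_{ν=1}^{k−1} λ_{k,ν} X^ν for k ≥ 2. Then L_2(X) = X, and for every k ≥ 3: L_k(X) = (1/(k−1)) · Σ_{r=1}^{k−1} L_r(X)·L_{k−r}(X). -/

import Mathlib

/-!
For `n ≥ 1` one has `L_{n+1} = X A_n / n!`, where `A_n = ∑_{σ ∈ S_n} X ^ asc σ` is the
Eulerian polynomial. Inserting a new maximum into the word of `τ ∈ S_n` keeps the number of
ascents when it goes in front or into the middle of an ascent, and raises it by one at the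
other `n - asc τ` positions; hence `A_{n+1} = (1 + n X) A_n + X (1 - X) A_n'`. From this
recursion, induction on `n` shows that the binomial convolution `B_n = ∑ C(n,i) A_i A_{n-i}`
equals `(n + 1) A_n + (1 - X) A_n'`, i.e. `A_{n+1} = X B_n + (1 - X) A_n`. Divided by `n!` this
is the claimed recursion: `X² B_n / n!` is the convolution of the `X A_i / i!`, and the
correction `(1 - X) / 2` by which `L_1` differs from `X A_0 / 0! = X` enters twice, through
`r = 1` and `r = k - 1`.
-/

/-- The number of ascents of a permutation `σ` of `Fin m`, i.e. the number of
indices `i` with `i+1 < m` and `σ i < σ (i+1)`. -/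
def ascents {m : ℕ} (σ : Equiv.Perm (Fin m)) : ℕ :=
  (Finset.univ.filter fun i : Fin m =>
    ∃ h : (i : ℕ) + 1 < m, σ i < σ ⟨(i : ℕ) + 1, h⟩).card

/-- `lam k ν` is the proportion of permutations of `{1, …, k-1}` with exactly `ν - 1`
ascents: `λ_{k,ν} = (1/(k-1)!) · #{σ ∈ S_{k-1} : #ascents(σ) = ν-1}`. -/
noncomputable def lam (k ν : ℕ) : ℚ :=
  ((Finset.univ.filter fun σ : Equiv.Perm (Fin (k - 1)) => ascents σ = ν - 1).card : ℚ) /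
    ((k - 1).factorial : ℚ)

/-- The polynomials `L_k(X)`: `L_1(X) = (X+1)/2` and
`L_k(X) = Σ_{ν=1}^{k-1} λ_{k,ν} X^ν` for `k ≥ 2`. -/
noncomputable def Lpoly : ℕ → Polynomial ℚ
  | 1 => Polynomial.C (1 / 2) * (Polynomial.X + 1)
  | k => ∑ ν ∈ Finset.Icc 1 (k - 1), Polynomial.C (lam k ν) * Polynomial.X ^ ν

open Finset Polynomial

theorem Fin.val_succAbove {n : ℕ} (p : Fin (n + 1)) (j : Fin n) :
    (p.succAbove j : ℕ) = if (j : ℕ) < p then (j : ℕ) else (j : ℕ) + 1 := by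
  unfold Fin.succAbove
  split_ifs <;> simp_all [Fin.lt_def, Fin.val_succ]

theorem Finset.Nat.sum_antidiagonal_choose_mul_swap {S : Type*} [CommSemiring S]
    (f : ℕ → ℕ → S) (n : ℕ) :
    ∑ ij ∈ antidiagonal n, (n.choose ij.1 : S) * f ij.2 ij.1 =
      ∑ ij ∈ antidiagonal n, (n.choose ij.1 : S) * f ij.1 ij.2 := by
  rw [← Finset.Nat.sum_antidiagonal_swap]
  refine sum_congr rfl fun ij hij => ?_
  rw [Prod.fst_swap, Prod.snd_swap,
    Nat.choose_symm_of_eq_add (by rw [add_comm, (mem_antidiagonal.1 hij)])]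

theorem Polynomial.X_mul_derivative_X_pow {R : Type*} [CommSemiring R] (a : ℕ) :
    X * derivative (X ^ a : R[X]) = (a : R[X]) * X ^ a := by
  rcases a with _ | a
  · simp
  · rw [derivative_X_pow, C_eq_natCast, Nat.add_sub_cancel]
    ring

section Ascents

variable {n : ℕ}

/-- The word of `insertMax τ p` is that of `τ` with the new largest letter `n` inserted at
position `p`. -/
def insertMax (τ : Equiv.Perm (Fin n)) (p : Fin (n + 1)) : Equiv.Perm (Fin (n + 1)) :=
  (finSuccEquiv' p).trans ((Equiv.optionCongr τ).trans (finSuccEquiv' (Fin.last n)).symm)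

@[simp]
theorem insertMax_apply_self (τ : Equiv.Perm (Fin n)) (p : Fin (n + 1)) :
    insertMax τ p p = Fin.last n := by
  simp [insertMax]

@[simp]
theorem insertMax_apply_succAbove (τ : Equiv.Perm (Fin n)) (p : Fin (n + 1)) (j : Fin n) :
    insertMax τ p (p.succAbove j) = (τ j).castSucc := by
  simp [insertMax, ← Fin.succAbove_last]

theorem insertMax_injective :
    Function.Injective fun q : Equiv.Perm (Fin n) × Fin (n + 1) => insertMax q.1 q.2 := by
  rintro ⟨τ, p⟩ ⟨τ', p'⟩ h
  have hp : p' = p := by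
    apply (insertMax τ p).injective
    rw [insertMax_apply_self, show insertMax τ p = insertMax τ' p' from h, insertMax_apply_self]
  subst hp
  have hτ : τ = τ' := Equiv.ext fun j => Fin.castSucc_injective _ <| by
    rw [← insertMax_apply_succAbove τ p', ← insertMax_apply_succAbove τ' p']
    exact congrFun (congrArg DFunLike.coe h) _
  rw [hτ]

theorem sum_perm_succ_eq_sum_insertMax {M : Type*} [AddCommMonoid M]
    (f : Equiv.Perm (Fin (n + 1)) → M) :
    ∑ σ, f σ = ∑ τ : Equiv.Perm (Fin n), ∑ p : Fin (n + 1), f (insertMax τ p) := by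
  have hbij : Function.Bijective fun q : Equiv.Perm (Fin n) × Fin (n + 1) => insertMax q.1 q.2 :=
    (Fintype.bijective_iff_injective_and_card _).2
      ⟨insertMax_injective, by simp [Fintype.card_perm, Nat.factorial_succ, mul_comm]⟩
  rw [← Fintype.sum_prod_type', Fintype.sum_bijective _ hbij _ _ fun _ => rfl]

theorem isAscent_insertMax_succAbove_iff (τ : Equiv.Perm (Fin n)) (p : Fin (n + 1))
    (j : Fin n) :
    (∃ h : (p.succAbove j : ℕ) + 1 < n + 1,
        insertMax τ p (p.succAbove j) < insertMax τ p ⟨p.succAbove j + 1, h⟩) ↔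
      j.succ = p ∨ ∃ h : (j : ℕ) + 1 < n, τ j < τ ⟨j + 1, h⟩ := by
  by_cases hjp : j.succ = p
  · subst hjp
    have hnext : (⟨j.succ.succAbove j + 1, by simp⟩ : Fin (n + 1)) = j.succ := by
      ext; simp
    simp only [true_or, iff_true]
    refine ⟨by simp, ?_⟩
    rw [hnext, insertMax_apply_self, insertMax_apply_succAbove]
    exact Fin.castSucc_lt_last _
  have hjp' : (j : ℕ) + 1 ≠ p := fun h => hjp (Fin.ext (by simp [h]))
  have hbound : (p.succAbove j : ℕ) + 1 < n + 1 ↔ (j : ℕ) + 1 < n := by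
    rw [Fin.val_succAbove]; have := p.isLt; split_ifs <;> omega
  have hnext (h : (j : ℕ) + 1 < n) :
      (⟨p.succAbove j + 1, hbound.2 h⟩ : Fin (n + 1)) = p.succAbove ⟨j + 1, h⟩ := by
    ext; simp only [Fin.val_succAbove]; split_ifs <;> omega
  simp only [hjp, false_or, insertMax_apply_succAbove]
  constructor
  · rintro ⟨h, hlt⟩
    rw [hnext (hbound.1 h), insertMax_apply_succAbove, Fin.castSucc_lt_castSucc_iff] at hlt
    exact ⟨hbound.1 h, hlt⟩
  · rintro ⟨h, hlt⟩
    refine ⟨hbound.2 h, ?_⟩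
    rw [hnext h, insertMax_apply_succAbove, Fin.castSucc_lt_castSucc_iff]
    exact hlt

theorem ascents_insertMax (τ : Equiv.Perm (Fin n)) (p : Fin (n + 1)) :
    ascents (insertMax τ p) =
      #{j : Fin n | j.succ = p ∨ ∃ h : (j : ℕ) + 1 < n, τ j < τ ⟨j + 1, h⟩} := by
  have hmax :
      ¬∃ h : (p : ℕ) + 1 < n + 1, insertMax τ p p < insertMax τ p ⟨p + 1, h⟩ := by
    rw [insertMax_apply_self]
    exact fun ⟨_, h⟩ => (Fin.le_last _).not_gt h
  rw [ascents, card_filter, card_filter, Fin.sum_univ_succAbove _ p, if_neg hmax, zero_add]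
  simp only [isAscent_insertMax_succAbove_iff]

theorem ascents_insertMax_zero (τ : Equiv.Perm (Fin n)) :
    ascents (insertMax τ 0) = ascents τ := by
  simp only [ascents_insertMax, Fin.succ_ne_zero, false_or]
  rfl

theorem ascents_insertMax_succ (τ : Equiv.Perm (Fin n)) (j : Fin n) :
    ascents (insertMax τ j.succ) =
      if ∃ h : (j : ℕ) + 1 < n, τ j < τ ⟨j + 1, h⟩ then ascents τ
      else ascents τ + 1 := by
  simp only [ascents_insertMax, filter_or, Fin.succ_inj]
  rw [filter_eq', if_pos (mem_univ _), ← insert_eq, card_insert_eq_ite]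
  simp only [mem_filter, mem_univ, true_and]
  rfl

theorem ascents_le (τ : Equiv.Perm (Fin n)) : ascents τ ≤ n :=
  (card_filter_le _ _).trans_eq (card_fin n)

theorem ascents_lt (τ : Equiv.Perm (Fin n)) (hn : 0 < n) : ascents τ < n := by
  refine (card_lt_card (filter_ssubset.2 ⟨⟨n - 1, by omega⟩, mem_univ _, ?_⟩)).trans_eq
    (card_fin n)
  rintro ⟨h, -⟩
  dsimp only at h
  omega

theorem sum_X_pow_ascents_insertMax {R : Type*} [CommSemiring R] (τ : Equiv.Perm (Fin n)) :
    ∑ p, (X : R[X]) ^ ascents (insertMax τ p) =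
      ((ascents τ + 1 : ℕ) : R[X]) * X ^ ascents τ +
        ((n - ascents τ : ℕ) : R[X]) * X ^ (ascents τ + 1) := by
  have hdesc :
      #{j : Fin n | ¬∃ h : (j : ℕ) + 1 < n, τ j < τ ⟨j + 1, h⟩} = n - ascents τ := by
    have hsplit := card_filter_add_card_filter_not (s := univ)
      (fun j : Fin n => ∃ h : (j : ℕ) + 1 < n, τ j < τ ⟨j + 1, h⟩)
    rw [card_univ, Fintype.card_fin] at hsplit
    rw [ascents]
    omega
  rw [Fin.sum_univ_succ, ascents_insertMax_zero]
  simp only [ascents_insertMax_succ, apply_ite (X ^ ·), sum_ite, sum_const, nsmul_eq_mul,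
    hdesc]
  rw [← ascents]
  push_cast
  ring

end Ascents

noncomputable def eulerianPoly (R : Type*) [CommRing R] (n : ℕ) : R[X] :=
  ∑ σ : Equiv.Perm (Fin n), X ^ ascents σ

section EulerianPoly

variable (R : Type*) [CommRing R]

theorem eulerianPoly_zero : eulerianPoly R 0 = 1 := by
  simp [eulerianPoly, Nat.le_zero.1 (ascents_le _)]

theorem eulerianPoly_succ (n : ℕ) :
    eulerianPoly R (n + 1) =
      (1 + (n : R[X]) * X) * eulerianPoly R n + X * (1 - X) * derivative (eulerianPoly R n) := by
  rw [eulerianPoly, sum_perm_succ_eq_sum_insertMax, eulerianPoly, derivative_sum, mul_sum, mul_sum,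
    ← sum_add_distrib]
  refine sum_congr rfl fun τ _ => ?_
  rw [sum_X_pow_ascents_insertMax, mul_right_comm, X_mul_derivative_X_pow,
    Nat.cast_sub (ascents_le τ)]
  push_cast
  ring

theorem X_mul_eulerianPoly {n : ℕ} (hn : n ≠ 0) :
    X * eulerianPoly R n =
      ∑ ν ∈ Icc 1 n, (#{σ : Equiv.Perm (Fin n) | ascents σ = ν - 1} : R[X]) * X ^ ν := by
  have hmaps : ∀ σ ∈ (univ : Finset (Equiv.Perm (Fin n))), ascents σ + 1 ∈ Icc 1 n :=
    fun σ _ => by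
      have := ascents_lt σ (Nat.pos_of_ne_zero hn)
      simp only [mem_Icc]
      omega
  rw [eulerianPoly, mul_sum, ← sum_fiberwise_of_maps_to hmaps]
  refine sum_congr rfl fun ν hν => ?_
  have hfiber : ({σ | ascents σ + 1 = ν} : Finset (Equiv.Perm (Fin n))) =
      ({σ | ascents σ = ν - 1} : Finset (Equiv.Perm (Fin n))) := by
    simp only [mem_Icc] at hν
    exact filter_congr fun σ _ => by omega
  rw [← hfiber, ← nsmul_eq_mul, ← sum_const]
  refine sum_congr rfl fun σ hσ => ?_
  rw [← (mem_filter.1 hσ).2, pow_succ']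

end EulerianPoly

section BinomialConvolution

variable {R : Type*} [CommRing R] (A : ℕ → R[X])

noncomputable def selfBinomConv (n : ℕ) : R[X] :=
  ∑ ij ∈ antidiagonal n, (n.choose ij.1 : R[X]) * (A ij.1 * A ij.2)

theorem selfBinomConv_succ_eq_two_mul (n : ℕ) :
    selfBinomConv A (n + 1) =
      2 * ∑ ij ∈ antidiagonal n, (n.choose ij.1 : R[X]) * (A ij.1 * A (ij.2 + 1)) := by
  rw [selfBinomConv, sum_antidiagonal_choose_succ_mul (fun i j => A i * A j), two_mul,
    ← Finset.Nat.sum_antidiagonal_swap (f := fun ij => (n.choose ij.2 : R[X]) * _)]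
  congr 1
  refine sum_congr rfl fun ij _ => ?_
  rw [Prod.fst_swap, Prod.snd_swap, mul_comm (A _)]

theorem two_mul_sum_antidiagonal_choose_snd_mul (n : ℕ) :
    2 * ∑ ij ∈ antidiagonal n, (n.choose ij.1 : R[X]) * (ij.2 * (A ij.1 * A ij.2)) =
      n * selfBinomConv A n := by
  have hswap :=
    Finset.Nat.sum_antidiagonal_choose_mul_swap (fun i j => (j : R[X]) * (A i * A j)) n
  rw [two_mul]
  nth_rw 1 [← hswap]
  rw [selfBinomConv, mul_sum, ← sum_add_distrib]
  refine sum_congr rfl fun ij hij => ?_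
  rw [← (mem_antidiagonal.1 hij), Nat.cast_add]
  ring

theorem derivative_selfBinomConv (n : ℕ) :
    derivative (selfBinomConv A n) =
      2 * ∑ ij ∈ antidiagonal n, (n.choose ij.1 : R[X]) * (A ij.1 * derivative (A ij.2)) := by
  have hswap :=
    Finset.Nat.sum_antidiagonal_choose_mul_swap (fun i j => A i * derivative (A j)) n
  rw [two_mul]
  nth_rw 1 [← hswap]
  rw [selfBinomConv, derivative_sum, ← sum_add_distrib]
  refine sum_congr rfl fun ij _ => ?_
  rw [derivative_mul, derivative_natCast, derivative_mul]
  ring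

variable {A}

theorem selfBinomConv_succ_of_eulerian_recursion
    (hA : ∀ n, A (n + 1) = (1 + (n : R[X]) * X) * A n + X * (1 - X) * derivative (A n))
    (n : ℕ) :
    selfBinomConv A (n + 1) =
      (2 + (n : R[X]) * X) * selfBinomConv A n + X * (1 - X) * derivative (selfBinomConv A n) := by
  have hsplit : ∑ ij ∈ antidiagonal n, (n.choose ij.1 : R[X]) * (A ij.1 * A (ij.2 + 1)) =
      selfBinomConv A n
        + X * ∑ ij ∈ antidiagonal n, (n.choose ij.1 : R[X]) * (ij.2 * (A ij.1 * A ij.2))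
        + X * (1 - X) *
          ∑ ij ∈ antidiagonal n, (n.choose ij.1 : R[X]) * (A ij.1 * derivative (A ij.2)) := by
    rw [selfBinomConv, mul_sum, mul_sum, ← sum_add_distrib, ← sum_add_distrib]
    refine sum_congr rfl fun ij _ => ?_
    rw [hA]
    ring
  rw [selfBinomConv_succ_eq_two_mul, hsplit, derivative_selfBinomConv]
  linear_combination X * two_mul_sum_antidiagonal_choose_snd_mul A n

theorem selfBinomConv_eq_of_eulerian_recursion (hA0 : A 0 = 1)
    (hA : ∀ n, A (n + 1) = (1 + (n : R[X]) * X) * A n + X * (1 - X) * derivative (A n))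
    (n : ℕ) :
    selfBinomConv A n = ((n : R[X]) + 1) * A n + (1 - X) * derivative (A n) := by
  induction n with
  | zero => simp [selfBinomConv, hA0]
  | succ n ih =>
    have hA' : derivative (A (n + 1)) =
        (n : R[X]) * A n + (1 + (n : R[X]) * X) * derivative (A n)
          + (1 - 2 * X) * derivative (A n) + X * (1 - X) * derivative (derivative (A n)) := by
      rw [hA]
      simp only [derivative_add, derivative_mul, derivative_sub, derivative_one, derivative_X,
        derivative_natCast]
      ring
    have ih' : derivative (selfBinomConv A n) =
        (n : R[X]) * derivative (A n) + (1 - X) * derivative (derivative (A n)) := by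
      rw [ih]
      simp only [derivative_add, derivative_mul, derivative_sub, derivative_one, derivative_X,
        derivative_natCast]
      ring
    rw [selfBinomConv_succ_of_eulerian_recursion hA, ih', ih, hA', hA]
    push_cast
    ring

theorem succ_eq_of_eulerian_recursion (hA0 : A 0 = 1)
    (hA : ∀ n, A (n + 1) = (1 + (n : R[X]) * X) * A n + X * (1 - X) * derivative (A n))
    (n : ℕ) :
    A (n + 1) = X * selfBinomConv A n + (1 - X) * A n := by
  rw [selfBinomConv_eq_of_eulerian_recursion hA0 hA, hA]
  ring

end BinomialConvolution

theorem C_half_mul_two : C (1 / 2 : ℚ) * 2 = 1 := by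
  rw [← C_ofNat, ← C_mul]
  norm_num

theorem Lpoly_succ (n : ℕ) :
    Lpoly (n + 1) = C (n.factorial : ℚ)⁻¹ * (X * eulerianPoly ℚ n) +
      if n = 0 then C (1 / 2) * (1 - X) else 0 := by
  rcases eq_or_ne n 0 with rfl | hn
  · rw [Lpoly, eulerianPoly_zero]
    simp only [Nat.factorial_zero, Nat.cast_one, inv_one, C_1, if_true]
    linear_combination X * C_half_mul_two
  rw [Lpoly.eq_2 _ (by omega), if_neg hn, add_zero, Nat.add_sub_cancel, X_mul_eulerianPoly ℚ hn,
    mul_sum]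
  refine sum_congr rfl fun ν _ => ?_
  rw [lam, Nat.add_sub_cancel, div_eq_inv_mul, C_mul, ← C_eq_natCast]
  ring

theorem sum_range_eulerianPoly_mul (n : ℕ) :
    ∑ i ∈ range (n + 1), C (i.factorial : ℚ)⁻¹ * (X * eulerianPoly ℚ i) *
        (C ((n - i).factorial : ℚ)⁻¹ * (X * eulerianPoly ℚ (n - i))) =
      C (n.factorial : ℚ)⁻¹ * (X * (X * selfBinomConv (eulerianPoly ℚ) n)) := by
  rw [selfBinomConv, Finset.Nat.sum_antidiagonal_eq_sum_range_succ_mk, mul_sum, mul_sum, mul_sum]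
  refine sum_congr rfl fun i hi => ?_
  have hcoeff : (i.factorial : ℚ)⁻¹ * ((n - i).factorial : ℚ)⁻¹ =
      (n.factorial : ℚ)⁻¹ * n.choose i := by
    rw [Nat.cast_choose ℚ (Nat.lt_succ_iff.1 (mem_range.1 hi))]
    field_simp
  have hcoeffC := congrArg C hcoeff
  rw [C_mul, C_mul] at hcoeffC
  dsimp only
  rw [← C_eq_natCast]
  linear_combination (X * X * eulerianPoly ℚ i * eulerianPoly ℚ (n - i)) * hcoeffC

theorem sum_Lpoly_mul_Lpoly {n : ℕ} (hn : n ≠ 0) :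
    ∑ r ∈ Icc 1 (n + 1), Lpoly r * Lpoly (n + 2 - r) =
      C (n.factorial : ℚ)⁻¹ * (X * eulerianPoly ℚ (n + 1)) := by
  set E : ℕ → ℚ[X] := fun i => C (i.factorial : ℚ)⁻¹ * (X * eulerianPoly ℚ i)
  set c : ℚ[X] := C (1 / 2) * (1 - X)
  have hreindex : ∑ r ∈ Icc 1 (n + 1), Lpoly r * Lpoly (n + 2 - r) =
      ∑ i ∈ range (n + 1), Lpoly (i + 1) * Lpoly (n - i + 1) := by
    rw [← Ico_add_one_right_eq_Icc, sum_Ico_eq_sum_range]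
    refine sum_congr rfl fun i hi => ?_
    rw [add_comm 1 i, show n + 2 - (i + 1) = n - i + 1 by rw [mem_range] at hi; omega]
  have hL (i : ℕ) : Lpoly (i + 1) = E i + if i = 0 then c else 0 := Lpoly_succ i
  have hterm : ∀ i ∈ range (n + 1), Lpoly (i + 1) * Lpoly (n - i + 1) =
      E i * E (n - i) + ((if i = 0 then c * E n else 0) + if i = n then c * E n else 0) := by
    intro i hi
    rw [hL, hL]
    rcases eq_or_ne i 0 with rfl | hi0
    · rw [Nat.sub_zero, if_pos rfl, if_pos rfl, if_neg hn, if_neg (Ne.symm hn)]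
      ring
    rcases eq_or_ne i n with rfl | hin
    · rw [Nat.sub_self, if_neg hi0, if_neg hi0, if_pos rfl, if_pos rfl]
      ring
    rw [mem_range] at hi
    rw [if_neg hi0, if_neg hi0, if_neg hin, if_neg (by omega : n - i ≠ 0)]
    ring
  rw [hreindex, sum_congr rfl hterm, sum_add_distrib, sum_add_distrib, sum_ite_eq', sum_ite_eq',
    if_pos (mem_range.2 n.succ_pos), if_pos (mem_range.2 n.lt_succ_self),
    sum_range_eulerianPoly_mul, succ_eq_of_eulerian_recursion (eulerianPoly_zero ℚ)
      (eulerianPoly_succ ℚ)]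
  linear_combination (1 - X) * E n * C_half_mul_two

/-- `L_2(X) = X`, and for every `k ≥ 3`,
`L_k(X) = (1/(k−1)) · Σ_{r=1}^{k−1} L_r(X)·L_{k−r}(X)`. -/
theorem Lpoly_recursion :
    Lpoly 2 = Polynomial.X ∧
      ∀ k : ℕ, 3 ≤ k →
        Lpoly k = Polynomial.C (1 / ((k : ℚ) - 1)) *
          ∑ r ∈ Finset.Icc 1 (k - 1), Lpoly r * Lpoly (k - r) := by
  refine ⟨?_, fun k hk => ?_⟩
  · rw [Lpoly_succ, eulerianPoly_succ, eulerianPoly_zero]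
    simp
  obtain ⟨n, rfl⟩ : ∃ n, k = n + 2 := ⟨k - 2, by omega⟩
  have hcoeff : 1 / ((n + 2 : ℕ) - 1 : ℚ) * (n.factorial : ℚ)⁻¹ =
      ((n + 1).factorial : ℚ)⁻¹ := by
    have hk1 : ((n + 2 : ℕ) : ℚ) - 1 = (n + 1 : ℕ) := by push_cast; ring
    rw [hk1, Nat.factorial_succ, Nat.cast_mul, mul_inv, one_div]
  rw [show n + 2 - 1 = n + 1 from rfl, sum_Lpoly_mul_Lpoly (by omega), Lpoly_succ,
    if_neg n.succ_ne_zero, add_zero, ← hcoeff, C_mul]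
  ring
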